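/- arXiv:2202.00148 — 2 statements merged into one kernel-verified Lean document; each statement's English description precedes it below -/
import Mathlib

section
/- Let β ≥ 0 and let A = (a_{n,k}) be a lower triangular infinite matrix of nonnegative real numbers with Σ_{k=0}^{n} a_{n,k} = 1 for every n. Suppose there is a constant C, independent of n and m, such that Σ_{k=0}^{m-1} (k+1)^β |a_{n,k}/(k+1)^β − a_{n,k+1}/(k+2)^β| ≤ C·a_{n,m} for all 0 ≤ m ≤ n. Then there is a constant C', independent of n, such that 1/(n+1) ≤ C'·a_{n,n} for every n. -/
/-!
Put `w j = (j + 1) ^ β` and `f j = a n j / w j`. Telescoping `f` from `k` to `n`, and using that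
the weights `w` increase, gives `w k * |f k - f n| ≤ C * a n n`, hence
`a n k = w k * f k ≤ (w k / w n) * a n n + C * a n n ≤ (1 + C) * a n n` for every `k ≤ n`.
Summing over the row, `1 ≤ (n + 1) * (1 + C) * a n n`.
-/

open Finset

noncomputable def weightedVariation (w x : ℕ → ℝ) (n : ℕ) : ℝ :=
  ∑ j ∈ range n, w j * |x j / w j - x (j + 1) / w (j + 1)|

theorem mul_abs_sub_le_sum_mul_abs_sub {w : ℕ → ℝ} (hw : Monotone w) (hw0 : ∀ j, 0 ≤ w j)
    (f : ℕ → ℝ) {k n : ℕ} (hkn : k ≤ n) :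
    w k * |f k - f n| ≤ ∑ j ∈ range n, w j * |f j - f (j + 1)| := by
  have htel : |f k - f n| ≤ ∑ j ∈ Ico k n, |f j - f (j + 1)| := by
    simpa only [Real.dist_eq] using dist_le_Ico_sum_dist f hkn
  calc w k * |f k - f n|
      ≤ ∑ j ∈ Ico k n, w k * |f j - f (j + 1)| := by
        rw [← mul_sum]; exact mul_le_mul_of_nonneg_left htel (hw0 k)
    _ ≤ ∑ j ∈ Ico k n, w j * |f j - f (j + 1)| :=
        sum_le_sum fun j hj => by gcongr; exact hw (mem_Ico.mp hj).1
    _ ≤ ∑ j ∈ range n, w j * |f j - f (j + 1)| := by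
        rw [range_eq_Ico]
        exact sum_le_sum_of_subset_of_nonneg (Ico_subset_Ico_left (Nat.zero_le k))
          fun j _ _ => mul_nonneg (hw0 j) (abs_nonneg _)

theorem le_one_add_mul_of_weightedVariation_le {w x : ℕ → ℝ} (hw : Monotone w)
    (hw0 : ∀ j, 0 < w j) {C : ℝ} {n : ℕ} (hxn : 0 ≤ x n)
    (hV : weightedVariation w x n ≤ C * x n) {k : ℕ} (hkn : k ≤ n) :
    x k ≤ (1 + C) * x n := by
  set f : ℕ → ℝ := fun j => x j / w j
  have hvar : w k * |f k - f n| ≤ C * x n :=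
    (mul_abs_sub_le_sum_mul_abs_sub hw (fun j => (hw0 j).le) f hkn).trans hV
  have hfn : w k * f n ≤ x n := by
    calc w k * f n ≤ w n * f n := by gcongr; exacts [div_nonneg hxn (hw0 n).le, hw hkn]
      _ = x n := mul_div_cancel₀ _ (hw0 n).ne'
  calc x k = w k * f n + w k * (f k - f n) := by
        simp only [f]; rw [← mul_add, add_sub_cancel, mul_div_cancel₀ _ (hw0 k).ne']
    _ ≤ x n + w k * |f k - f n| := by
        gcongr
        · exact (hw0 k).le
        · exact le_abs_self _
    _ ≤ (1 + C) * x n := by linarith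

theorem one_le_mul_of_sum_range_eq_one {x : ℕ → ℝ} {M : ℝ} {n : ℕ}
    (hsum : ∑ k ∈ range (n + 1), x k = 1) (hle : ∀ k ≤ n, x k ≤ M) :
    1 ≤ ((n : ℝ) + 1) * M := by
  calc (1 : ℝ) = ∑ k ∈ range (n + 1), x k := hsum.symm
    _ ≤ ∑ _k ∈ range (n + 1), M :=
        sum_le_sum fun k hk => hle k (Nat.lt_succ_iff.mp (mem_range.mp hk))
    _ = ((n : ℝ) + 1) * M := by simp

theorem HBV_ann_lower_bound_general
    (β : ℝ) (hβ : 0 ≤ β)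
    (a : ℕ → ℕ → ℝ)
    (hnn : ∀ n k : ℕ, 0 ≤ a n k)
    (hrow : ∀ n : ℕ, ∑ k ∈ Finset.range (n + 1), a n k = 1)
    (C : ℝ) (hC : 0 < C)
    (hA : ∀ n m : ℕ, m ≤ n →
      ∑ k ∈ Finset.range m,
        ((k : ℝ) + 1) ^ β * |a n k / ((k : ℝ) + 1) ^ β - a n (k + 1) / ((k : ℝ) + 2) ^ β|
        ≤ C * a n m)
    :
    ∃ C' : ℝ, 0 < C' ∧ ∀ n : ℕ, ((n : ℝ) + 1)⁻¹ ≤ C' * a n n := by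
  set w : ℕ → ℝ := fun j => ((j : ℝ) + 1) ^ β
  have hw : Monotone w := fun i j hij => by
    dsimp only [w]; gcongr
  have hw0 : ∀ j, 0 < w j := fun j => by positivity
  have hV : ∀ n, weightedVariation w (a n) n ≤ C * a n n := fun n => by
    refine le_of_eq_of_le (sum_congr rfl fun j _ => ?_) (hA n n le_rfl)
    simp only [w]; push_cast; ring_nf
  refine ⟨1 + C, by linarith, fun n => ?_⟩
  have hrow_le : 1 ≤ ((n : ℝ) + 1) * ((1 + C) * a n n) :=
    one_le_mul_of_sum_range_eq_one (hrow n) fun k hkn =>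
      le_one_add_mul_of_weightedVariation_le hw hw0 (hnn n n) (hV n) hkn
  rw [inv_le_iff_one_le_mul₀ (by positivity)]
  linarith

theorem HBV_ann_lower_bound
    (β : ℝ) (hβ : 0 ≤ β)
    (a : ℕ → ℕ → ℝ) (htri : ∀ n k : ℕ, n < k → a n k = 0)
    (hnn : ∀ n k : ℕ, 0 ≤ a n k)
    (hrow : ∀ n : ℕ, ∑ k ∈ Finset.range (n + 1), a n k = 1)
    (C : ℝ) (hC : 0 < C)
    (hA : ∀ n m : ℕ, m ≤ n →
      ∑ k ∈ Finset.range m,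
        ((k : ℝ) + 1) ^ β * |a n k / ((k : ℝ) + 1) ^ β - a n (k + 1) / ((k : ℝ) + 2) ^ β|
        ≤ C * a n m)
    :
    ∃ C' : ℝ, 0 < C' ∧ ∀ n : ℕ, ((n : ℝ) + 1)⁻¹ ≤ C' * a n n :=
  HBV_ann_lower_bound_general β hβ a hnn hrow C hC hA
end

section
/- Let f be a continuous 2π-periodic real-valued function with modulus of continuity ω and let A = (a_{n,k}) be a lower triangular infinite matrix of real numbers satisfying: (i) a_{n,k} ≥ 0 and Σ_{k=0}^{n} a_{n,k} = 1 for every n; (ii) a_{n,k} ≥ a_{n,k+1} for k = 0,1,...,n−1 and all n. Then for n ≥ 1, ‖T_{n,A}(f) − f‖_∞ = O( ω(π/n) + Σ_{k=1}^{n} k^{-1} ω(π/k) Σ_{r=0}^{k+1} a_{n,r} ), with the implied constant independent of n. -/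
open Real MeasureTheory

/-- The `k`-th partial sum of the (trigonometric) Fourier series of `f` at `x`. -/
noncomputable def fourierPartialSum (f : ℝ → ℝ) (k : ℕ) (x : ℝ) : ℝ :=
  (1 / (2 * Real.pi)) * (∫ t in (-Real.pi)..Real.pi, f t) +
    ∑ j ∈ Finset.Icc 1 k,
      ((1 / Real.pi) * (∫ t in (-Real.pi)..Real.pi, f t * Real.cos (j * t)) * Real.cos (j * x) +
        (1 / Real.pi) * (∫ t in (-Real.pi)..Real.pi, f t * Real.sin (j * t)) * Real.sin (j * x))

/-- The `A`-transform `T_{n,A}(f;x) = ∑_{k=0}^n a_{n,k} S_k(f;x)`. -/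
noncomputable def matrixTransform (a : ℕ → ℕ → ℝ) (f : ℝ → ℝ) (n : ℕ) (x : ℝ) : ℝ :=
  ∑ k ∈ Finset.range (n + 1), a n k * fourierPartialSum f k x

/-- The modulus of continuity `ω(δ,f)`. -/
noncomputable def modulusOfContinuity (f : ℝ → ℝ) (δ : ℝ) : ℝ :=
  sSup {y : ℝ | ∃ x t : ℝ, |t| ≤ δ ∧ y = |f (x + t) - f x|}

/-!
Writing `φ_x(t) = f(x+t) + f(x-t) - 2f(x)` and `D_k` for the Dirichlet kernel, the error is
`T_{n,A}f(x) - f(x) = π⁻¹ ∫₀^π φ_x(t) K_n(t) dt` with `K_n = ∑ₖ a_{n,k} D_k`, and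
`|φ_x(t)| ≤ 2ω(|t|)`. On `[0, π/n]` the trivial bound `|K_n| ≤ n + 1/2` gives `O(ω(π/n))`.
On `[π/(m+1), π/m]` split `K_n` at the index `m`: the head is at most
`(m + 1/2) ∑_{r ≤ m} a_{n,r}`, and since `2 sin(t/2) D_k(t) = sin((k + 1/2)t)` has bounded
partial sums, Abel summation with the decreasing weights bounds the tail by
`a_{n,m+1} / (2 sin²(t/2)) ≤ (m+1)² a_{n,m+1} / 2`, which monotonicity again dominates by
`(m+1) ∑_{r ≤ m+1} a_{n,r}` (here `sin(t/2) ≥ t/π ≥ 1/(m+1)`). Integrating over these pieces,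
of length `π / (m(m+1))`, gives the sum.
-/

open Finset

noncomputable def dirichletKernel (k : ℕ) (t : ℝ) : ℝ := 1 / 2 + ∑ j ∈ Icc 1 k, cos (j * t)

theorem continuous_dirichletKernel (k : ℕ) : Continuous (dirichletKernel k) := by
  unfold dirichletKernel
  fun_prop

theorem dirichletKernel_neg (k : ℕ) (t : ℝ) : dirichletKernel k (-t) = dirichletKernel k t := by
  simp only [dirichletKernel, mul_neg, cos_neg]

theorem abs_dirichletKernel_le (k : ℕ) (t : ℝ) : |dirichletKernel k t| ≤ k + 1 / 2 := by
  calc |dirichletKernel k t| ≤ |1 / 2| + ∑ j ∈ Icc 1 k, |cos (j * t)| :=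
        (abs_add_le _ _).trans (by gcongr; exact abs_sum_le_sum_abs _ _)
    _ ≤ 1 / 2 + ∑ _j ∈ Icc 1 k, (1 : ℝ) := by
        gcongr
        · norm_num
        · exact abs_cos_le_one _
    _ = k + 1 / 2 := by simp [add_comm]

theorem dirichletKernel_mul_two_sin_half (k : ℕ) (t : ℝ) :
    dirichletKernel k t * (2 * sin (t / 2)) = sin ((k + 1 / 2) * t) := by
  induction k with
  | zero => simp [dirichletKernel]; ring_nf
  | succ k ih =>
    rw [dirichletKernel, sum_Icc_succ_top (by omega), ← add_assoc, ← dirichletKernel, add_mul, ih,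
      ← eq_sub_iff_add_eq', sin_sub_sin]
    push_cast
    ring_nf

theorem integral_dirichletKernel (k : ℕ) : ∫ t in -π..π, dirichletKernel k t = π := by
  have hcos : ∀ j ∈ Icc 1 k, ∫ t in -π..π, cos ((j : ℝ) * t) = 0 := fun j hj => by
    have hj : (j : ℝ) ≠ 0 := by have := (mem_Icc.1 hj).1; positivity
    simp [intervalIntegral.integral_comp_mul_left (fun u => cos u) hj, integral_cos,
      sin_nat_mul_pi]
  unfold dirichletKernel
  rw [intervalIntegral.integral_add (by simp) (Continuous.intervalIntegrable (by fun_prop) _ _),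
    intervalIntegral.integral_finsetSum fun j _ => Continuous.intervalIntegrable (by fun_prop) _ _,
    sum_congr rfl hcos]
  simp only [intervalIntegral.integral_const, sub_neg_eq_add, smul_eq_mul, sum_const_zero,
    add_zero]
  ring

theorem two_mul_sin_half_mul_sum_sin (p t : ℝ) (N : ℕ) :
    2 * sin (t / 2) * ∑ i ∈ range N, sin ((p + i + 1 / 2) * t) =
      cos (p * t) - cos ((p + N) * t) := by
  have hterm : ∀ i : ℕ, 2 * sin (t / 2) * sin ((p + i + 1 / 2) * t)
      = cos ((p + i) * t) - cos ((p + (i + 1 : ℕ)) * t) := fun i => by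
    rw [cos_sub_cos, show ((p + i) * t - (p + (i + 1 : ℕ)) * t) / 2 = -(t / 2) by push_cast; ring,
      sin_neg]
    push_cast
    ring_nf
  rw [mul_sum, sum_congr rfl fun i _ => hterm i,
    sum_range_sub' (fun i : ℕ => cos ((p + i) * t))]
  simp

theorem abs_sum_sin_le {p t : ℝ} (ht : 0 < sin (t / 2)) (N : ℕ) :
    |∑ i ∈ range N, sin ((p + i + 1 / 2) * t)| ≤ 1 / sin (t / 2) := by
  have h : |2 * sin (t / 2) * ∑ i ∈ range N, sin ((p + i + 1 / 2) * t)| ≤ 2 := by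
    rw [two_mul_sin_half_mul_sum_sin]
    exact (abs_sub _ _).trans (by linarith [abs_cos_le_one (p * t), abs_cos_le_one ((p + N) * t)])
  rw [abs_mul, abs_of_pos (by positivity)] at h
  rw [le_div_iff₀ ht]
  linarith

theorem abs_sum_mul_le_of_antitone {b c : ℕ → ℝ} {M : ℝ} {N : ℕ} (hb0 : ∀ k, 0 ≤ b k)
    (hb : ∀ k, k + 1 < N → b (k + 1) ≤ b k) (hc : ∀ j ≤ N, |∑ k ∈ range j, c k| ≤ M) :
    |∑ k ∈ range N, b k * c k| ≤ b 0 * M := by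
  have hM : 0 ≤ M := (abs_nonneg _).trans (hc 0 (Nat.zero_le N))
  rcases Nat.eq_zero_or_pos N with rfl | hN
  · simpa using mul_nonneg (hb0 0) hM
  have hparts := sum_range_by_parts b c N
  simp only [smul_eq_mul] at hparts
  have hdiff : ∀ i ∈ range (N - 1),
      |(b (i + 1) - b i) * ∑ k ∈ range (i + 1), c k| ≤ (b i - b (i + 1)) * M := fun i hi => by
    have := hb i (by have := mem_range.1 hi; omega)
    rw [abs_mul, abs_sub_comm, abs_of_nonneg (by linarith)]
    exact mul_le_mul_of_nonneg_left (hc _ (by have := mem_range.1 hi; omega)) (by linarith)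
  calc |∑ k ∈ range N, b k * c k|
      ≤ |b (N - 1) * ∑ k ∈ range N, c k| + ∑ i ∈ range (N - 1), (b i - b (i + 1)) * M := by
        rw [hparts]
        exact (abs_sub _ _).trans (add_le_add le_rfl
          ((abs_sum_le_sum_abs _ _).trans (sum_le_sum hdiff)))
    _ ≤ b (N - 1) * M + (b 0 - b (N - 1)) * M := by
        rw [← sum_mul, sum_range_sub' b, abs_mul, abs_of_nonneg (hb0 _)]
        exact add_le_add (mul_le_mul_of_nonneg_left (hc N le_rfl) (hb0 _)) le_rfl
    _ = b 0 * M := by ring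

noncomputable def weightedDirichletKernel (b : ℕ → ℝ) (n : ℕ) (t : ℝ) : ℝ :=
  ∑ k ∈ range (n + 1), b k * dirichletKernel k t

theorem continuous_weightedDirichletKernel (b : ℕ → ℝ) (n : ℕ) :
    Continuous (weightedDirichletKernel b n) := by
  unfold weightedDirichletKernel
  have := continuous_dirichletKernel
  fun_prop

theorem weightedDirichletKernel_neg (b : ℕ → ℝ) (n : ℕ) (t : ℝ) :
    weightedDirichletKernel b n (-t) = weightedDirichletKernel b n t := by
  simp only [weightedDirichletKernel, dirichletKernel_neg]

theorem weightedDirichletKernel_add (b : ℕ → ℝ) (m N : ℕ) (t : ℝ) :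
    weightedDirichletKernel b (m + N) t = weightedDirichletKernel b m t +
      ∑ i ∈ range N, b (m + 1 + i) * dirichletKernel (m + 1 + i) t := by
  rw [weightedDirichletKernel, show m + N + 1 = m + 1 + N by ring, sum_range_add]
  rfl

theorem abs_weightedDirichletKernel_le {b : ℕ → ℝ} (hb0 : ∀ k, 0 ≤ b k) (n : ℕ) (t : ℝ) :
    |weightedDirichletKernel b n t| ≤ (n + 1 / 2) * ∑ k ∈ range (n + 1), b k := by
  rw [mul_sum]
  refine (abs_sum_le_sum_abs _ _).trans (sum_le_sum fun k hk => ?_)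
  have hkn : (k : ℝ) ≤ n := by exact_mod_cast Nat.lt_succ_iff.1 (mem_range.1 hk)
  rw [abs_mul, abs_of_nonneg (hb0 k), mul_comm]
  exact mul_le_mul_of_nonneg_right ((abs_dirichletKernel_le k t).trans (by linarith)) (hb0 k)

theorem abs_sum_mul_dirichletKernel_le {b : ℕ → ℝ} {p N : ℕ} {t : ℝ} (hb0 : ∀ k, 0 ≤ b k)
    (hb : ∀ i, i + 1 < N → b (p + (i + 1)) ≤ b (p + i)) (ht : 0 < sin (t / 2)) :
    |∑ i ∈ range N, b (p + i) * dirichletKernel (p + i) t| ≤ b p / (2 * sin (t / 2) ^ 2) := by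
  have hD : ∀ k : ℕ, dirichletKernel k t = sin ((k + 1 / 2) * t) / (2 * sin (t / 2)) :=
    fun k => eq_div_of_mul_eq (by positivity) (dirichletKernel_mul_two_sin_half k t)
  have habel := abs_sum_mul_le_of_antitone (b := fun i => b (p + i))
    (c := fun i => sin ((p + i + 1 / 2) * t)) (fun i => hb0 _) hb fun j _ => abs_sum_sin_le ht j
  simp only [add_zero] at habel
  simp only [hD, Nat.cast_add, mul_div_assoc']
  rw [← sum_div, abs_div, abs_of_pos (by positivity : 0 < 2 * sin (t / 2)),
    div_le_div_iff₀ (by positivity) (by positivity)]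
  calc _ ≤ b p * (1 / sin (t / 2)) * (2 * sin (t / 2) ^ 2) := by gcongr
    _ = b p * (2 * sin (t / 2)) := by field_simp

theorem one_div_add_one_le_sin_half {m : ℕ} {t : ℝ} (ht : t ∈ Set.Icc (π / (m + 1)) (π / m)) :
    1 / (m + 1) ≤ sin (t / 2) := by
  have htπ : t ≤ π := by
    rcases Nat.eq_zero_or_pos m with rfl | hm
    · have := ht.1.trans ht.2
      simp only [CharP.cast_eq_zero, zero_add, div_one, div_zero] at this
      linarith [pi_pos]
    · exact ht.2.trans (div_le_self pi_pos.le (by exact_mod_cast hm))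
  have ht0 : 0 < t := lt_of_lt_of_le (by positivity) ht.1
  have hπt : π ≤ t * (m + 1) := (div_le_iff₀ (by positivity)).1 ht.1
  calc 1 / (m + 1) ≤ 2 / π * (t / 2) := by
        rw [show 2 / π * (t / 2) = t / π by ring, div_le_div_iff₀ (by positivity) pi_pos]
        linarith
    _ ≤ sin (t / 2) := mul_le_sin (by linarith [pi_pos]) (by linarith)

theorem abs_weightedDirichletKernel_le_of_mem_Icc {b : ℕ → ℝ} {n m : ℕ} {t : ℝ}
    (hb0 : ∀ k, 0 ≤ b k) (hb : ∀ k < n, b (k + 1) ≤ b k) (hmn : m < n)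
    (ht : t ∈ Set.Icc (π / (m + 1)) (π / m)) :
    |weightedDirichletKernel b n t| ≤ 2 * (m + 1) * ∑ r ∈ range (m + 2), b r := by
  obtain ⟨N, rfl⟩ : ∃ N, n = m + N := ⟨n - m, by omega⟩
  set A := ∑ r ∈ range (m + 2), b r
  have hsin := one_div_add_one_le_sin_half ht
  have hsin0 : 0 < sin (t / 2) := lt_of_lt_of_le (by positivity) hsin
  have hhead : |weightedDirichletKernel b m t| ≤ (m + 1) * A := by
    refine (abs_weightedDirichletKernel_le hb0 m t).trans (mul_le_mul (by linarith) ?_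
      (sum_nonneg fun k _ => hb0 k) (by positivity))
    exact sum_le_sum_of_subset_of_nonneg (range_mono (by omega)) fun k _ _ => hb0 k
  have htail := abs_sum_mul_dirichletKernel_le (p := m + 1) (N := N) hb0
    (fun i hi => hb (m + 1 + i) (by omega)) hsin0
  have hmax : ((m + 2 : ℕ) : ℝ) * b (m + 1) ≤ A := by
    have hanti : AntitoneOn b (Set.Iic (m + N)) :=
      antitoneOn_of_succ_le Set.ordConnected_Iic fun k _ _ hk => hb k (by simpa using hk)
    simpa using card_nsmul_le_sum (range (m + 2)) b (b (m + 1)) fun r hr => by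
      have := mem_range.1 hr
      exact hanti (Set.mem_Iic.2 (by omega)) (Set.mem_Iic.2 (by omega)) (by omega)
  have htail' : b (m + 1) / (2 * sin (t / 2) ^ 2) ≤ (m + 1) / 2 * A := by
    have hms : 1 ≤ ((m + 1) * sin (t / 2)) ^ 2 := by
      rw [div_le_iff₀ (by positivity)] at hsin
      nlinarith
    push_cast at hmax
    rw [div_le_iff₀ (by positivity)]
    calc b (m + 1) ≤ ((m + 1) * sin (t / 2)) ^ 2 * b (m + 1) := le_mul_of_one_le_left (hb0 _) hms
      _ = (m + 1) * sin (t / 2) ^ 2 * ((m + 1) * b (m + 1)) := by ring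
      _ ≤ (m + 1) * sin (t / 2) ^ 2 * A := by gcongr; linarith [hb0 (m + 1)]
      _ = (m + 1) / 2 * A * (2 * sin (t / 2) ^ 2) := by ring
  rw [weightedDirichletKernel_add]
  calc _ ≤ (m + 1) * A + (m + 1) / 2 * A :=
        (abs_add_le _ _).trans (add_le_add hhead (htail.trans htail'))
    _ ≤ 2 * (m + 1) * A := by nlinarith [sum_nonneg fun k (_ : k ∈ range (m + 2)) => hb0 k]

section FourierRepresentation

variable {f : ℝ → ℝ}

theorem integral_comp_add_left_of_periodic (hper : Function.Periodic f (2 * π)) (x : ℝ) :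
    ∫ t in -π..π, f (x + t) = ∫ t in -π..π, f t := by
  rw [intervalIntegral.integral_comp_add_left]
  simpa only [show x + -π + 2 * π = x + π by ring, show -π + 2 * π = π by ring] using
    hper.intervalIntegral_add_eq (x + -π) (-π)

theorem integral_comp_add_left_mul_cos (hf : Continuous f) (hper : Function.Periodic f (2 * π))
    (j : ℕ) (x : ℝ) :
    ∫ t in -π..π, f (x + t) * cos (j * t) =
      (∫ t in -π..π, f t * cos (j * t)) * cos (j * x) +
        (∫ t in -π..π, f t * sin (j * t)) * sin (j * x) := by
  set g : ℝ → ℝ := fun u => f u * cos (j * (u - x))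
  have hg : Function.Periodic g (2 * π) := fun u => by
    simp only [g, hper u, show (j : ℝ) * (u + 2 * π - x) = j * (u - x) + j * (2 * π) by ring,
      cos_add_nat_mul_two_pi]
  have hexp : ∀ u, g u = f u * cos (j * u) * cos (j * x) + f u * sin (j * u) * sin (j * x) :=
    fun u => by simp only [g, mul_sub, cos_sub]; ring
  calc ∫ t in -π..π, f (x + t) * cos (j * t) = ∫ t in -π..π, g (x + t) := by simp [g]
    _ = ∫ t in -π..π, g t := integral_comp_add_left_of_periodic hg x
    _ = _ := by
      simp only [hexp]
      rw [intervalIntegral.integral_add (Continuous.intervalIntegrable (by fun_prop) _ _)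
        (Continuous.intervalIntegrable (by fun_prop) _ _), intervalIntegral.integral_mul_const,
        intervalIntegral.integral_mul_const]

theorem fourierPartialSum_eq_integral (hf : Continuous f) (hper : Function.Periodic f (2 * π))
    (k : ℕ) (x : ℝ) :
    fourierPartialSum f k x = π⁻¹ * ∫ t in -π..π, f (x + t) * dirichletKernel k t := by
  simp only [dirichletKernel, mul_add, mul_sum]
  rw [intervalIntegral.integral_add (Continuous.intervalIntegrable (by fun_prop) _ _)
      (Continuous.intervalIntegrable (by fun_prop) _ _),
    intervalIntegral.integral_finsetSum fun j _ => Continuous.intervalIntegrable (by fun_prop) _ _,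
    intervalIntegral.integral_mul_const, integral_comp_add_left_of_periodic hper,
    sum_congr rfl fun j _ => integral_comp_add_left_mul_cos hf hper j x, fourierPartialSum,
    mul_add, mul_sum]
  congr 1
  · ring
  · exact sum_congr rfl fun j _ => by ring

theorem fourierPartialSum_sub_eq_integral (hf : Continuous f)
    (hper : Function.Periodic f (2 * π)) (k : ℕ) (x : ℝ) :
    fourierPartialSum f k x - f x =
      π⁻¹ * ∫ t in -π..π, (f (x + t) - f x) * dirichletKernel k t := by
  have := continuous_dirichletKernel k
  simp only [sub_mul]
  rw [fourierPartialSum_eq_integral hf hper, intervalIntegral.integral_sub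
      (Continuous.intervalIntegrable (by fun_prop) _ _)
      (Continuous.intervalIntegrable (by fun_prop) _ _),
    intervalIntegral.integral_const_mul, integral_dirichletKernel]
  field_simp

end FourierRepresentation

theorem integral_neg_eq_integral_add_comp_neg {g : ℝ → ℝ} {c : ℝ}
    (hg : IntervalIntegrable g volume (-c) c) :
    ∫ t in -c..c, g t = ∫ t in 0..c, (g t + g (-t)) := by
  have hzero : (0 : ℝ) ∈ Set.uIcc (-c) c := by
    rcases le_total 0 c with hc | hc
    · exact Set.mem_uIcc.2 (Or.inl ⟨by linarith, hc⟩)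
    · exact Set.mem_uIcc.2 (Or.inr ⟨hc, by linarith⟩)
  have hleft : IntervalIntegrable g volume (-c) 0 :=
    hg.mono_set (Set.uIcc_subset_uIcc Set.left_mem_uIcc hzero)
  have hright : IntervalIntegrable g volume 0 c :=
    hg.mono_set (Set.uIcc_subset_uIcc hzero Set.right_mem_uIcc)
  have hneg : IntervalIntegrable (fun t => g (-t)) volume 0 c := by
    simpa using ((IntervalIntegrable.iff_comp_neg (by simp)).1 hleft).symm
  rw [← intervalIntegral.integral_add_adjacent_intervals hleft hright,
    intervalIntegral.integral_add hright hneg, intervalIntegral.integral_comp_neg, neg_zero,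
    add_comm]

noncomputable def centralSecondDiff (f : ℝ → ℝ) (x t : ℝ) : ℝ := f (x + t) + f (x - t) - 2 * f x

theorem continuous_centralSecondDiff {f : ℝ → ℝ} (hf : Continuous f) (x : ℝ) :
    Continuous (centralSecondDiff f x) := by
  unfold centralSecondDiff
  fun_prop

theorem matrixTransform_sub_eq_integral {f : ℝ → ℝ} {a : ℕ → ℕ → ℝ} {n : ℕ} (hf : Continuous f)
    (hper : Function.Periodic f (2 * π)) (hrow : ∑ k ∈ range (n + 1), a n k = 1) (x : ℝ) :
    matrixTransform a f n x - f x =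
      π⁻¹ * ∫ t in 0..π, centralSecondDiff f x t * weightedDirichletKernel (a n) n t := by
  have hK := continuous_weightedDirichletKernel (a n) n
  have hfull : matrixTransform a f n x - f x =
      π⁻¹ * ∫ t in -π..π, (f (x + t) - f x) * weightedDirichletKernel (a n) n t := by
    have := continuous_dirichletKernel
    calc matrixTransform a f n x - f x
        = ∑ k ∈ range (n + 1), a n k * (fourierPartialSum f k x - f x) := by
          simp only [matrixTransform, mul_sub, sum_sub_distrib, ← sum_mul, hrow, one_mul]
      _ = _ := by
          simp only [fourierPartialSum_sub_eq_integral hf hper, weightedDirichletKernel, mul_sum,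
            ← intervalIntegral.integral_const_mul]
          rw [← intervalIntegral.integral_finsetSum fun k _ =>
            Continuous.intervalIntegrable (by fun_prop) _ _]
          exact intervalIntegral.integral_congr fun t _ => sum_congr rfl fun k _ => by ring
  rw [hfull,
    integral_neg_eq_integral_add_comp_neg (Continuous.intervalIntegrable (by fun_prop) _ _)]
  congr 1
  refine intervalIntegral.integral_congr fun t _ => ?_
  simp only [weightedDirichletKernel_neg, centralSecondDiff, ← sub_eq_add_neg]
  ring

section ModulusOfContinuity

variable {f : ℝ → ℝ} {M δ : ℝ}

theorem bddAbove_modulusOfContinuity_set (hM : ∀ x, |f x| ≤ M) :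
    BddAbove {y : ℝ | ∃ x t : ℝ, |t| ≤ δ ∧ y = |f (x + t) - f x|} :=
  ⟨2 * M, by rintro _ ⟨x, t, -, rfl⟩; linarith [abs_sub (f (x + t)) (f x), hM (x + t), hM x]⟩

theorem abs_sub_le_modulusOfContinuity (hM : ∀ x, |f x| ≤ M) {x t : ℝ} (ht : |t| ≤ δ) :
    |f (x + t) - f x| ≤ modulusOfContinuity f δ :=
  le_csSup (bddAbove_modulusOfContinuity_set hM) ⟨x, t, ht, rfl⟩

theorem modulusOfContinuity_nonneg (hM : ∀ x, |f x| ≤ M) (hδ : 0 ≤ δ) :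
    0 ≤ modulusOfContinuity f δ :=
  (abs_nonneg _).trans (abs_sub_le_modulusOfContinuity hM (x := 0) (t := 0) (by simpa using hδ))

theorem abs_centralSecondDiff_le (hM : ∀ x, |f x| ≤ M) {x t : ℝ} (ht : |t| ≤ δ) :
    |centralSecondDiff f x t| ≤ 2 * modulusOfContinuity f δ := by
  have h₁ := abs_sub_le_modulusOfContinuity hM (x := x) ht
  have h₂ : |f (x + -t) - f x| ≤ modulusOfContinuity f δ :=
    abs_sub_le_modulusOfContinuity hM (by rwa [abs_neg])
  rw [← sub_eq_add_neg] at h₂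
  calc |centralSecondDiff f x t| = |(f (x + t) - f x) + (f (x - t) - f x)| := by
        rw [centralSecondDiff]; ring_nf
    _ ≤ _ := (abs_add_le _ _).trans (by linarith)

end ModulusOfContinuity

theorem abs_integral_le_sum_of_abs_le {F : ℝ → ℝ} {a C : ℕ → ℝ} {p q : ℕ} (hpq : p ≤ q)
    (hF : ∀ k ∈ Ico p q, IntervalIntegrable F volume (a k) (a (k + 1)))
    (hC : ∀ k ∈ Ico p q, ∀ t ∈ Set.uIoc (a k) (a (k + 1)), |F t| ≤ C k) :
    |∫ t in a p..a q, F t| ≤ ∑ k ∈ Ico p q, C k * |a (k + 1) - a k| := by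
  rw [← intervalIntegral.sum_integral_adjacent_intervals_Ico hpq fun k hk =>
    hF k (mem_Ico.2 (Set.mem_Ico.1 hk))]
  refine (abs_sum_le_sum_abs _ _).trans (sum_le_sum fun k hk => ?_)
  simpa only [Real.norm_eq_abs] using intervalIntegral.norm_integral_le_of_norm_le_const
    (f := F) (a := a k) (b := a (k + 1)) (by simpa only [Real.norm_eq_abs] using hC k hk)

section KernelIntegral

variable {f : ℝ → ℝ} {M : ℝ} {b : ℕ → ℝ} {n : ℕ}

theorem abs_integral_centralSecondDiff_mul_le_of_le_pi_div (hM : ∀ x, |f x| ≤ M)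
    (hb0 : ∀ k, 0 ≤ b k) (hsum : ∑ k ∈ range (n + 1), b k = 1) (hn : 1 ≤ n) (x : ℝ) :
    |∫ t in 0..π / n, centralSecondDiff f x t * weightedDirichletKernel b n t| ≤
      3 * π * modulusOfContinuity f (π / n) := by
  have hω := modulusOfContinuity_nonneg hM (by positivity : 0 ≤ π / n)
  have hbound : ∀ t ∈ Set.uIoc 0 (π / n),
      ‖centralSecondDiff f x t * weightedDirichletKernel b n t‖ ≤
        2 * modulusOfContinuity f (π / n) * (n + 1 / 2) := fun t ht => by
    rw [Set.uIoc_of_le (by positivity)] at ht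
    rw [Real.norm_eq_abs, abs_mul]
    have hpos : 0 < π / n := by positivity
    exact mul_le_mul (abs_centralSecondDiff_le hM (abs_le.2 ⟨by linarith [ht.1], ht.2⟩))
      (by simpa [hsum] using abs_weightedDirichletKernel_le hb0 n t) (abs_nonneg _) (by positivity)
  refine (intervalIntegral.norm_integral_le_of_norm_le_const hbound).trans ?_
  have hn' : (1 : ℝ) ≤ n := by exact_mod_cast hn
  rw [sub_zero, abs_of_pos (by positivity), show 2 * modulusOfContinuity f (π / n) * (n + 1 / 2) *
    (π / n) = π * modulusOfContinuity f (π / n) * (2 + 1 / n) by field_simp]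
  have : 1 / (n : ℝ) ≤ 1 := by rw [div_le_one (by positivity)]; exact hn'
  nlinarith [pi_pos, mul_nonneg pi_pos.le hω]

theorem abs_integral_centralSecondDiff_mul_le_of_pi_div_le (hf : Continuous f)
    (hM : ∀ x, |f x| ≤ M) (hb0 : ∀ k, 0 ≤ b k) (hb : ∀ k < n, b (k + 1) ≤ b k) (hn : 1 ≤ n)
    (x : ℝ) :
    |∫ t in π / n..π, centralSecondDiff f x t * weightedDirichletKernel b n t| ≤
      4 * π * ∑ k ∈ Icc 1 n,
        (k : ℝ)⁻¹ * modulusOfContinuity f (π / k) * ∑ r ∈ range (k + 2), b r := by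
  have hcont : Continuous fun t => centralSecondDiff f x t * weightedDirichletKernel b n t :=
    (continuous_centralSecondDiff hf x).mul (continuous_weightedDirichletKernel b n)
  have hpieces := abs_integral_le_sum_of_abs_le (a := fun k : ℕ => π / k)
    (C := fun k => 2 * modulusOfContinuity f (π / k) * (2 * (k + 1) * ∑ r ∈ range (k + 2), b r))
    hn (fun _ _ => hcont.intervalIntegrable _ _) fun k hk t ht => by
      have hk' := mem_Ico.1 hk
      have hk1 : (1 : ℝ) ≤ k := by exact_mod_cast hk'.1
      rw [Set.uIoc_of_ge (div_le_div_of_nonneg_left pi_pos.le (by positivity)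
        (by push_cast; linarith))] at ht
      push_cast at ht
      have ht0 : 0 < π / (k + 1) := by positivity
      rw [abs_mul]
      exact mul_le_mul (abs_centralSecondDiff_le hM (abs_le.2 ⟨by linarith [ht.1, ht.2], ht.2⟩))
        (abs_weightedDirichletKernel_le_of_mem_Icc hb0 hb hk'.2 ⟨ht.1.le, ht.2⟩) (abs_nonneg _)
        (by have := modulusOfContinuity_nonneg hM (by positivity : 0 ≤ π / k); positivity)
  rw [intervalIntegral.integral_symm, abs_neg]
  simp only [Nat.cast_one, div_one] at hpieces
  refine hpieces.trans ?_
  rw [mul_sum]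
  refine (sum_le_sum fun k hk => le_of_eq ?_).trans
    (sum_le_sum_of_subset_of_nonneg Ico_subset_Icc_self fun k hk _ => ?_)
  · have hk1 : (1 : ℝ) ≤ k := by exact_mod_cast (mem_Ico.1 hk).1
    rw [abs_of_nonpos (sub_nonpos.2 (div_le_div_of_nonneg_left pi_pos.le (by positivity)
      (by push_cast; linarith)))]
    push_cast
    field_simp
    ring
  · have := modulusOfContinuity_nonneg hM (by positivity : 0 ≤ π / k)
    have := sum_nonneg fun r (_ : r ∈ range (k + 2)) => hb0 r
    positivity

end KernelIntegral

theorem chandra_monotone_decreasing_sum_general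
    (f : ℝ → ℝ) (hf : Continuous f) (hper : Function.Periodic f (2 * Real.pi))
    (a : ℕ → ℕ → ℝ)
    (hnn : ∀ n k : ℕ, 0 ≤ a n k)
    (hrow : ∀ n : ℕ, ∑ k ∈ Finset.range (n + 1), a n k = 1)
    (hmono : ∀ n : ℕ, ∀ k : ℕ, k < n → a n (k + 1) ≤ a n k)
    :
    ∃ C' : ℝ, 0 < C' ∧ ∀ (n : ℕ), 1 ≤ n → ∀ x : ℝ,
      |matrixTransform a f n x - f x| ≤ C' *
        (modulusOfContinuity f (Real.pi / n) +
          ∑ k ∈ Finset.Icc 1 n, ((k : ℝ))⁻¹ * modulusOfContinuity f (Real.pi / k) *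
            ∑ r ∈ Finset.range (k + 2), a n r) := by
  obtain ⟨M, hM⟩ := (hper.isBounded_of_continuous (by positivity) hf).exists_norm_le
  replace hM : ∀ x, |f x| ≤ M := fun x => hM _ (Set.mem_range_self x)
  refine ⟨4, by norm_num, fun n hn x => ?_⟩
  have hcont : Continuous fun t => centralSecondDiff f x t * weightedDirichletKernel (a n) n t :=
    (continuous_centralSecondDiff hf x).mul (continuous_weightedDirichletKernel (a n) n)
  have hnear := abs_integral_centralSecondDiff_mul_le_of_le_pi_div hM (hnn n) (hrow n) hn x
  have hfar := abs_integral_centralSecondDiff_mul_le_of_pi_div_le hf hM (hnn n) (hmono n) hn x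
  have hω := modulusOfContinuity_nonneg hM (by positivity : 0 ≤ π / n)
  set S := ∑ k ∈ Icc 1 n, (k : ℝ)⁻¹ * modulusOfContinuity f (π / k) * ∑ r ∈ range (k + 2), a n r
  rw [matrixTransform_sub_eq_integral hf hper (hrow n), abs_mul, abs_of_pos (inv_pos.2 pi_pos),
    ← intervalIntegral.integral_add_adjacent_intervals (b := π / n)
      (hcont.intervalIntegrable _ _) (hcont.intervalIntegrable _ _)]
  calc π⁻¹ * |_ + _| ≤ π⁻¹ * (3 * π * modulusOfContinuity f (π / n) + 4 * π * S) := by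
        gcongr
        exact (abs_add_le _ _).trans (add_le_add hnear hfar)
    _ = 3 * modulusOfContinuity f (π / n) + 4 * S := by field_simp
    _ ≤ _ := by linarith

theorem chandra_monotone_decreasing_sum
    (f : ℝ → ℝ) (hf : Continuous f) (hper : Function.Periodic f (2 * Real.pi))
    (a : ℕ → ℕ → ℝ) (htri : ∀ n k : ℕ, n < k → a n k = 0)
    (hnn : ∀ n k : ℕ, 0 ≤ a n k)
    (hrow : ∀ n : ℕ, ∑ k ∈ Finset.range (n + 1), a n k = 1)
    (hmono : ∀ n : ℕ, ∀ k : ℕ, k < n → a n (k + 1) ≤ a n k)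
    :
    ∃ C' : ℝ, 0 < C' ∧ ∀ (n : ℕ), 1 ≤ n → ∀ x : ℝ,
      |matrixTransform a f n x - f x| ≤ C' *
        (modulusOfContinuity f (Real.pi / n) +
          ∑ k ∈ Finset.Icc 1 n, ((k : ℝ))⁻¹ * modulusOfContinuity f (Real.pi / k) *
            ∑ r ∈ Finset.range (k + 2), a n r) :=
  chandra_monotone_decreasing_sum_general f hf hper a hnn hrow hmono
end
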